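/- arXiv:2309.05225 — 3 statements merged into one kernel-verified Lean document; each statement's English description precedes it below -/
import Mathlib

section
/- Let X be a compact metric space, f_{0,∞} = {f_n} a sequence of continuous self-maps on X, Λ ⊂ X nonempty, and A an increasing sequence of nonnegative integers. Then the topological sequence entropy of f_{0,∞} on Λ along A defined via open covers equals the one defined via separated sets (equivalently via spanning sets). -/
open Filter Set MeasureTheory

/-- `nacomp f i n = f (i+n-1) ∘ ⋯ ∘ f i`, the `n`-fold composition of the
nonautonomous system starting at index `i`. -/
def nacomp {X : Type*} (f : ℕ → X → X) (i : ℕ) : ℕ → X → X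
  | 0 => id
  | n + 1 => f (i + n) ∘ nacomp f i n

/-- `E` is an `(n, ε, A)`-separated subset of `Λ` for the nonautonomous system `f`. -/
def IsSepSet {X : Type*} [PseudoMetricSpace X] (f : ℕ → X → X) (A : ℕ → ℕ) (n : ℕ)
    (ε : ℝ) (Λ : Set X) (E : Finset X) : Prop :=
  ↑E ⊆ Λ ∧ ∀ x ∈ E, ∀ y ∈ E, x ≠ y →
    ∃ j : Fin n, ε < dist (nacomp f 0 (A j) x) (nacomp f 0 (A j) y)

/-- `s_n(ε, A, f, Λ)`: maximal cardinality of an `(n,ε,A)`-separated subset of `Λ`. -/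
noncomputable def maxSep {X : Type*} [PseudoMetricSpace X] (f : ℕ → X → X) (A : ℕ → ℕ)
    (n : ℕ) (ε : ℝ) (Λ : Set X) : ℕ :=
  sSup {m | ∃ E : Finset X, IsSepSet f A n ε Λ E ∧ E.card = m}

/-- Topological sequence entropy of `f` on `Λ` along `A`, via separated sets:
`lim_{ε → 0} limsup_n (1/n) log s_n(ε,A,f,Λ)`, the limit realized as a supremum over `ε > 0`. -/
noncomputable def sepEnt {X : Type*} [PseudoMetricSpace X] (f : ℕ → X → X) (A : ℕ → ℕ)
    (Λ : Set X) : EReal :=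
  ⨆ ε : {ε : ℝ // 0 < ε},
    limsup (fun n : ℕ => ((Real.log (maxSep f A n ε Λ) / n : ℝ) : EReal)) atTop

/-- A finite open cover of the whole space. -/
def IsFinOpenCover {X : Type*} [TopologicalSpace X] (𝒜 : Finset (Set X)) : Prop :=
  (∀ u ∈ 𝒜, IsOpen u) ∧ ⋃₀ ↑𝒜 = (univ : Set X)

/-- A cell `⋂_j (f_0^{a_j})⁻¹ (u j)` of the join `⋁_{j} f_0^{-a_j} 𝒜`. -/
def seqCell {X : Type*} (f : ℕ → X → X) (A : ℕ → ℕ) (n : ℕ) (u : Fin n → Set X) : Set X :=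
  ⋂ j : Fin n, nacomp f 0 (A j.1) ⁻¹' (u j)

/-- `N((⋁_{j=1}^n f_0^{-a_j} 𝒜)|_Λ)`: the minimal cardinality of a subfamily of the join
cover whose union contains `Λ`. -/
noncomputable def coverN {X : Type*} (f : ℕ → X → X) (A : ℕ → ℕ) (n : ℕ) (Λ : Set X)
    (𝒜 : Finset (Set X)) : ℕ :=
  sInf {m | ∃ S : Finset (Fin n → Set X), (∀ u ∈ S, ∀ j, u j ∈ 𝒜) ∧
    (Λ ⊆ ⋃ u ∈ S, seqCell f A n u) ∧ S.card = m}

/-- `h_A(f, Λ, 𝒜)`, the sequence entropy of `f` on `Λ` relative to the open cover `𝒜`. -/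
noncomputable def coverEntOf {X : Type*} (f : ℕ → X → X) (A : ℕ → ℕ) (Λ : Set X)
    (𝒜 : Finset (Set X)) : EReal :=
  limsup (fun n : ℕ => ((Real.log (coverN f A n Λ 𝒜) / n : ℝ) : EReal)) atTop

/-- `h_A(f, Λ)`: topological sequence entropy via open covers. -/
noncomputable def coverEnt {X : Type*} [TopologicalSpace X] (f : ℕ → X → X) (A : ℕ → ℕ)
    (Λ : Set X) : EReal :=
  ⨆ 𝒜 : {𝒜 : Finset (Set X) // IsFinOpenCover 𝒜}, coverEntOf f A Λ 𝒜

/-- The supremum topological sequence entropy `h*(f) = sup_A h_A(f)`. -/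
noncomputable def supSeqEnt {X : Type*} [PseudoMetricSpace X] (f : ℕ → X → X) : EReal :=
  ⨆ A : {A : ℕ → ℕ // StrictMono A}, sepEnt f A univ

/-- The `n`-th compositions system `f_{0,∞}^n`, whose `k`-th map is `f_{kn}^n`. -/
def compSys {X : Type*} (f : ℕ → X → X) (n : ℕ) : ℕ → X → X :=
  fun k => nacomp f (k * n) n

/-- A finite measurable partition of the space. -/
def IsFinMeasPartition {X : Type*} [MeasurableSpace X] (P : Finset (Set X)) : Prop :=
  (∀ s ∈ P, MeasurableSet s) ∧ ((P : Set (Set X)).PairwiseDisjoint id) ∧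
    ⋃₀ ↑P = (univ : Set X)

/-- `h_{A,μ}(f, P) = limsup (1/n) H_μ(⋁_{j=1}^n f_0^{-a_j} P)`. -/
noncomputable def measSeqEntPart {X : Type*} [MeasurableSpace X] (μ : Measure X)
    (f : ℕ → X → X) (A : ℕ → ℕ) (P : Finset (Set X)) : EReal :=
  limsup (fun n : ℕ =>
    (((∑ u : Fin n → {s // s ∈ P},
        Real.negMulLog (μ (seqCell f A n (fun j => (u j : Set X)))).toReal) / n : ℝ) : EReal))
    atTop

/-- The measure-theoretic sequence entropy `h_{A,μ}(f)`. -/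
noncomputable def measSeqEnt {X : Type*} [MeasurableSpace X] (μ : Measure X)
    (f : ℕ → X → X) (A : ℕ → ℕ) : EReal :=
  ⨆ P : {P : Finset (Set X) // IsFinMeasPartition P}, measSeqEntPart μ f A P

/-- Covering dimension at most `d`: every finite open cover has a finite open refinement
of order at most `d + 1`. -/
def HasCovDimLE (X : Type*) [TopologicalSpace X] (d : ℕ) : Prop :=
  ∀ 𝒜 : Finset (Set X), IsFinOpenCover 𝒜 → ∃ ℬ : Finset (Set X), IsFinOpenCover ℬ ∧
    (∀ v ∈ ℬ, ∃ u ∈ 𝒜, v ⊆ u) ∧ ∀ x : X, ({v : Set X | v ∈ ℬ ∧ x ∈ v}).ncard ≤ d + 1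

/-- The induced nonautonomous system `f̂` on the space of Borel probability measures,
carrying the Lévy–Prokhorov (Prohorov) metric: `f̂ n μ = (f n)_* μ`. -/
noncomputable def inducedSys {X : Type*} [MeasurableSpace X] (f : ℕ → X → X)
    (hf : ∀ n, Measurable (f n)) :
    ℕ → LevyProkhorov (ProbabilityMeasure X) → LevyProkhorov (ProbabilityMeasure X) :=
  fun n μ => (LevyProkhorov.toMeasureEquiv (α := ProbabilityMeasure X)).symm
    (((LevyProkhorov.toMeasureEquiv (α := ProbabilityMeasure X)) μ).map (hf n).aemeasurable)

/-- Multi-sensitivity of a nonautonomous system. -/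
def MultiSensitive {X : Type*} [PseudoMetricSpace X] (f : ℕ → X → X) : Prop :=
  ∃ δ : ℝ, 0 < δ ∧ ∀ (k : ℕ) (V : Fin k → Set X),
    (∀ i, IsOpen (V i)) → (∀ i, (V i).Nonempty) →
      ∃ n : ℕ, 1 ≤ n ∧ ∀ i, δ < Metric.diam (nacomp f 0 n '' V i)

/-!
Both entropies are squeezed between the same counting functions. A maximal `(n, ε, A)`-separated
set is `(n, ε, A)`-spanning, so if `δ > ε` is a Lebesgue number of an open cover `𝒜`, the cells of
the join picked out along the orbits of its points cover `Λ`: `N(𝒜, n) ≤ s_n(ε)`. Conversely, two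
points of an `(n, ε, A)`-separated set never share a cell of the join of a cover by sets of
diameter at most `ε`: `s_n(ε) ≤ N(𝒜, n)`. Taking `limsup (1/n) log` and suprema gives equality.
-/

-- `log 0 = 0` keeps this true at `a = 0`.
lemma Real.log_natCast_le_log_natCast {a b : ℕ} (h : a ≤ b) : Real.log a ≤ Real.log b := by
  rcases Nat.eq_zero_or_pos a with rfl | ha
  · simpa using Real.log_natCast_nonneg b
  · exact Real.log_le_log (by exact_mod_cast ha) (by exact_mod_cast h)

lemma limsup_log_div_le_limsup_log_div {a b : ℕ → ℕ} (h : ∀ n, a n ≤ b n) :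
    limsup (fun n : ℕ => ((Real.log (a n) / n : ℝ) : EReal)) atTop ≤
      limsup (fun n : ℕ => ((Real.log (b n) / n : ℝ) : EReal)) atTop :=
  limsup_le_limsup (Eventually.of_forall fun n => EReal.coe_le_coe_iff.mpr <|
    div_le_div_of_nonneg_right (Real.log_natCast_le_log_natCast (h n)) n.cast_nonneg)
    isCobounded_le_of_bot isBounded_le_of_top

section Cover

variable {X : Type*} (f : ℕ → X → X) (A : ℕ → ℕ)

def subcoverCards (n : ℕ) (Λ : Set X) (𝒜 : Finset (Set X)) : Set ℕ :=
  {m | ∃ S : Finset (Fin n → Set X), (∀ u ∈ S, ∀ j, u j ∈ 𝒜) ∧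
    (Λ ⊆ ⋃ u ∈ S, seqCell f A n u) ∧ S.card = m}

lemma mem_seqCell {n : ℕ} {u : Fin n → Set X} {x : X} :
    x ∈ seqCell f A n u ↔ ∀ j : Fin n, nacomp f 0 (A j) x ∈ u j :=
  mem_iInter

lemma exists_subcover_card_eq_coverN {𝒜 : Finset (Set X)} (h𝒜 : ⋃₀ (𝒜 : Set (Set X)) = univ)
    (n : ℕ) (Λ : Set X) :
    ∃ S : Finset (Fin n → Set X), (∀ u ∈ S, ∀ j, u j ∈ 𝒜) ∧
      Λ ⊆ ⋃ u ∈ S, seqCell f A n u ∧ S.card = coverN f A n Λ 𝒜 := by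
  classical
  refine Nat.sInf_mem (s := subcoverCards f A n Λ 𝒜) ⟨_, Fintype.piFinset fun _ => 𝒜,
    fun u hu => Fintype.mem_piFinset.mp hu, fun x _ => ?_, rfl⟩
  have hcover : ∀ j : Fin n, ∃ u ∈ 𝒜, nacomp f 0 (A j) x ∈ u := fun j =>
    mem_sUnion.mp (h𝒜.symm.subset (mem_univ _))
  choose u hu𝒜 hxu using hcover
  exact mem_iUnion₂.mpr ⟨u, Fintype.mem_piFinset.mpr hu𝒜, (mem_seqCell f A).mpr hxu⟩

end Cover

section Separated

variable {X : Type*} [PseudoMetricSpace X] (f : ℕ → X → X) (A : ℕ → ℕ)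

def sepSetCards (n : ℕ) (ε : ℝ) (Λ : Set X) : Set ℕ :=
  {m | ∃ E : Finset X, IsSepSet f A n ε Λ E ∧ E.card = m}

lemma zero_mem_sepSetCards (n : ℕ) (ε : ℝ) (Λ : Set X) : 0 ∈ sepSetCards f A n ε Λ :=
  ⟨∅, ⟨by simp, by simp⟩, rfl⟩

lemma IsSepSet.insert [DecidableEq X] {n : ℕ} {ε : ℝ} {Λ : Set X} {E : Finset X}
    (hE : IsSepSet f A n ε Λ E) {x : X} (hx : x ∈ Λ)
    (hfar : ∀ y ∈ E, ∃ j : Fin n, ε < dist (nacomp f 0 (A j) x) (nacomp f 0 (A j) y)) :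
    IsSepSet f A n ε Λ (insert x E) := by
  refine ⟨by simpa using insert_subset hx hE.1, fun a ha b hb hab => ?_⟩
  rcases Finset.mem_insert.mp ha with rfl | haE <;> rcases Finset.mem_insert.mp hb with rfl | hbE
  · exact absurd rfl hab
  · exact hfar b hbE
  · simpa only [dist_comm] using hfar a haE
  · exact hE.2 a haE b hbE hab

lemma IsSepSet.card_le_coverN {n : ℕ} {ε : ℝ} {Λ : Set X} {E : Finset X}
    (hE : IsSepSet f A n ε Λ E) {𝒜 : Finset (Set X)} (h𝒜 : ⋃₀ (𝒜 : Set (Set X)) = univ)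
    (hsmall : ∀ u ∈ 𝒜, ∀ a ∈ u, ∀ b ∈ u, dist a b ≤ ε) :
    E.card ≤ coverN f A n Λ 𝒜 := by
  obtain ⟨S, hS𝒜, hScover, hScard⟩ := exists_subcover_card_eq_coverN f A h𝒜 n Λ
  have hcell : ∀ x ∈ E, ∃ u ∈ S, x ∈ seqCell f A n u := fun x hx =>
    by simpa using hScover (hE.1 hx)
  choose! cell hcellS hxcell using hcell
  refine hScard ▸ Finset.card_le_card_of_injOn cell hcellS fun x hx y hy hxy => ?_
  by_contra hne
  obtain ⟨j, hj⟩ := hE.2 x hx y hy hne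
  have hx' := (mem_seqCell f A).mp (hxcell x hx) j
  have hy' := (mem_seqCell f A).mp (hxcell y hy) j
  rw [← hxy] at hy'
  exact hj.not_ge (hsmall _ (hS𝒜 _ (hcellS x hx) j) _ hx' _ hy')

lemma maxSep_le_coverN {𝒜 : Finset (Set X)} (h𝒜 : ⋃₀ (𝒜 : Set (Set X)) = univ) {ε : ℝ}
    (hsmall : ∀ u ∈ 𝒜, ∀ a ∈ u, ∀ b ∈ u, dist a b ≤ ε) (n : ℕ) (Λ : Set X) :
    maxSep f A n ε Λ ≤ coverN f A n Λ 𝒜 :=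
  csSup_le ⟨0, zero_mem_sepSetCards f A n ε Λ⟩ fun _ ⟨_, hE, hcard⟩ =>
    hcard ▸ hE.card_le_coverN f A h𝒜 hsmall

variable [CompactSpace X]

lemma exists_isFinOpenCover_dist_le {ε : ℝ} (hε : 0 < ε) :
    ∃ 𝒜 : Finset (Set X), IsFinOpenCover 𝒜 ∧ ∀ u ∈ 𝒜, ∀ a ∈ u, ∀ b ∈ u, dist a b ≤ ε := by
  classical
  obtain ⟨t, ht⟩ := isCompact_univ.elim_finite_subcover (fun x : X => Metric.ball x (ε / 2))
    (fun _ => Metric.isOpen_ball) fun x _ => mem_iUnion.mpr ⟨x, Metric.mem_ball_self (by linarith)⟩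
  refine ⟨t.image fun x => Metric.ball x (ε / 2), ⟨?_, ?_⟩, ?_⟩
  · simp only [Finset.mem_image]
    rintro _ ⟨x, -, rfl⟩
    exact Metric.isOpen_ball
  · refine eq_univ_of_univ_subset fun x hx => ?_
    obtain ⟨c, hc, hxc⟩ := mem_iUnion₂.mp (ht hx)
    exact ⟨_, Finset.mem_coe.mpr (Finset.mem_image_of_mem _ hc), hxc⟩
  · simp only [Finset.mem_image]
    rintro _ ⟨x, -, rfl⟩ a ha b hb
    linarith [dist_triangle_right a b x, Metric.mem_ball.mp ha, Metric.mem_ball.mp hb]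

lemma bddAbove_sepSetCards {ε : ℝ} (hε : 0 < ε) (n : ℕ) (Λ : Set X) :
    BddAbove (sepSetCards f A n ε Λ) := by
  obtain ⟨𝒜, h𝒜, hsmall⟩ := exists_isFinOpenCover_dist_le (X := X) hε
  exact ⟨coverN f A n Λ 𝒜, fun _ ⟨_, hE, hcard⟩ => hcard ▸ hE.card_le_coverN f A h𝒜.2 hsmall⟩

lemma exists_isSepSet_card_eq_maxSep {ε : ℝ} (hε : 0 < ε) (n : ℕ) (Λ : Set X) :
    ∃ E : Finset X, IsSepSet f A n ε Λ E ∧ E.card = maxSep f A n ε Λ :=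
  Nat.sSup_mem ⟨0, zero_mem_sepSetCards f A n ε Λ⟩ (bddAbove_sepSetCards f A hε n Λ)

lemma IsSepSet.card_le_maxSep {n : ℕ} {ε : ℝ} (hε : 0 < ε) {Λ : Set X} {E : Finset X}
    (hE : IsSepSet f A n ε Λ E) : E.card ≤ maxSep f A n ε Λ :=
  le_csSup (bddAbove_sepSetCards f A hε n Λ) ⟨E, hE, rfl⟩

lemma IsSepSet.exists_forall_dist_le {n : ℕ} {ε : ℝ} (hε : 0 < ε) {Λ : Set X} {E : Finset X}
    (hE : IsSepSet f A n ε Λ E) (hcard : E.card = maxSep f A n ε Λ) {x : X} (hx : x ∈ Λ) :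
    ∃ y ∈ E, ∀ j : Fin n, dist (nacomp f 0 (A j) x) (nacomp f 0 (A j) y) ≤ ε := by
  classical
  by_contra! hfar
  have hxE : x ∉ E := fun hxE => by
    obtain ⟨j, hj⟩ := hfar x hxE
    linarith [dist_self (nacomp f 0 (A j) x)]
  have hle := (hE.insert f A hx hfar).card_le_maxSep f A hε
  rw [Finset.card_insert_of_notMem hxE, hcard] at hle
  exact hle.not_gt (Nat.lt_succ_self _)

lemma coverN_le_maxSep {𝒜 : Finset (Set X)} {δ ε : ℝ} (hε : 0 < ε) (hεδ : ε < δ)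
    (hLebesgue : ∀ x : X, ∃ u ∈ 𝒜, Metric.ball x δ ⊆ u) (n : ℕ) (Λ : Set X) :
    coverN f A n Λ 𝒜 ≤ maxSep f A n ε Λ := by
  classical
  obtain ⟨E, hE, hcard⟩ := exists_isSepSet_card_eq_maxSep f A hε n Λ
  choose U hU𝒜 hballU using hLebesgue
  let cell : X → Fin n → Set X := fun y j => U (nacomp f 0 (A j) y)
  refine (Nat.sInf_le (s := subcoverCards f A n Λ 𝒜)
    ⟨E.image cell, ?_, fun x hx => ?_, rfl⟩).trans (Finset.card_image_le.trans hcard.le)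
  · simp only [Finset.mem_image]
    rintro _ ⟨y, -, rfl⟩ j
    exact hU𝒜 _
  · obtain ⟨y, hyE, hxy⟩ := hE.exists_forall_dist_le f A hε hcard hx
    refine mem_iUnion₂.mpr ⟨cell y, Finset.mem_image_of_mem cell hyE, ?_⟩
    exact (mem_seqCell f A).mpr fun j => hballU _ (Metric.mem_ball.mpr ((hxy j).trans_lt hεδ))

lemma coverEntOf_le_sepEnt {𝒜 : Finset (Set X)} (h𝒜 : IsFinOpenCover 𝒜) (Λ : Set X) :
    coverEntOf f A Λ 𝒜 ≤ sepEnt f A Λ := by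
  obtain ⟨δ, hδ, hLebesgue⟩ := lebesgue_number_lemma_of_metric_sUnion isCompact_univ h𝒜.1
    h𝒜.2.symm.subset
  refine le_iSup_of_le (⟨δ / 2, half_pos hδ⟩ : {ε : ℝ // 0 < ε}) ?_
  exact limsup_log_div_le_limsup_log_div fun n =>
    coverN_le_maxSep f A (half_pos hδ) (half_lt_self hδ) (fun x => hLebesgue x (mem_univ x)) n Λ

lemma limsup_log_maxSep_le_coverEnt {ε : ℝ} (hε : 0 < ε) (Λ : Set X) :
    limsup (fun n : ℕ => ((Real.log (maxSep f A n ε Λ) / n : ℝ) : EReal)) atTop ≤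
      coverEnt f A Λ := by
  obtain ⟨𝒜, h𝒜, hsmall⟩ := exists_isFinOpenCover_dist_le (X := X) hε
  exact le_iSup_of_le (⟨𝒜, h𝒜⟩ : {𝒜 : Finset (Set X) // IsFinOpenCover 𝒜})
    (limsup_log_div_le_limsup_log_div fun n => maxSep_le_coverN f A h𝒜.2 hsmall n Λ)

end Separated

theorem coverEnt_eq_sepEnt_general {X : Type*} [MetricSpace X] [CompactSpace X]
    (f : ℕ → X → X) (Λ : Set X) (A : ℕ → ℕ) :
    coverEnt f A Λ = sepEnt f A Λ :=
  le_antisymm (iSup_le fun 𝒜 => coverEntOf_le_sepEnt f A 𝒜.2 Λ)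
    (iSup_le fun ε => limsup_log_maxSep_le_coverEnt f A ε.2 Λ)

/-- The open-cover and separated-set definitions of topological sequence entropy agree. -/
theorem coverEnt_eq_sepEnt {X : Type*} [MetricSpace X] [CompactSpace X]
    (f : ℕ → X → X) (hf : ∀ n, Continuous (f n)) (Λ : Set X) (hΛ : Λ.Nonempty)
    (A : ℕ → ℕ) (hA : StrictMono A) :
    coverEnt f A Λ = sepEnt f A Λ :=
  coverEnt_eq_sepEnt_general f Λ A
end

section
/- Let X be a compact metric space, f_{0,∞} a sequence of continuous self-maps, A an increasing sequence of nonnegative integers, and {α_n} a sequence of finite open covers of X whose diameters d(α_n) tend to 0. Then lim_{n→∞} h_A(f_{0,∞}, α_n) = h_A(f_{0,∞}) (with the convention that if h_A(f_{0,∞}) = ∞ then h_A(f_{0,∞}, α_n) → ∞). -/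
open Filter Set MeasureTheory

/-! A cover by sets of small diameter refines any fixed open cover (Lebesgue number lemma), and
refining a cover can only increase `N(⋁ f_0^{-a_j} 𝒜)`, hence `h_A(f, 𝒜)`. So
`h_A(f, β) ≤ h_A(f, α n)` eventually for every finite open cover `β`; the reverse bound
`h_A(f, α n) ≤ h_A(f)` is immediate. -/

section Refinement

variable {X : Type*}

theorem iUnion_seqCell_piFinset (f : ℕ → X → X) (A : ℕ → ℕ) (n : ℕ) {𝒜 : Finset (Set X)}
    (h𝒜 : ⋃₀ (𝒜 : Set (Set X)) = univ) :
    ⋃ u ∈ Fintype.piFinset fun _ : Fin n => 𝒜, seqCell f A n u = univ := by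
  refine eq_univ_of_forall fun x => ?_
  have hx : ∀ j : Fin n, ∃ u ∈ 𝒜, nacomp f 0 (A j) x ∈ u := fun j => by
    have hx : nacomp f 0 (A j) x ∈ ⋃₀ (𝒜 : Set (Set X)) := h𝒜 ▸ mem_univ _
    simpa using hx
  choose u hu hxu using hx
  exact mem_iUnion₂.2 ⟨u, Fintype.mem_piFinset.2 hu, mem_iInter.2 hxu⟩

theorem exists_card_eq_coverN (f : ℕ → X → X) (A : ℕ → ℕ) (n : ℕ) (Λ : Set X)
    {𝒜 : Finset (Set X)} (h𝒜 : ⋃₀ (𝒜 : Set (Set X)) = univ) :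
    ∃ S : Finset (Fin n → Set X), (∀ u ∈ S, ∀ j, u j ∈ 𝒜) ∧
      (Λ ⊆ ⋃ u ∈ S, seqCell f A n u) ∧ S.card = coverN f A n Λ 𝒜 :=
  Nat.sInf_mem (s := {m | ∃ S : Finset (Fin n → Set X), (∀ u ∈ S, ∀ j, u j ∈ 𝒜) ∧
      (Λ ⊆ ⋃ u ∈ S, seqCell f A n u) ∧ S.card = m})
    ⟨_, Fintype.piFinset fun _ => 𝒜, fun _ hu => Fintype.mem_piFinset.1 hu,
      (iUnion_seqCell_piFinset f A n h𝒜).symm ▸ subset_univ Λ, rfl⟩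

/-- Refinement is only required of nonempty members: an empty set lies in no member of an empty
cover, yet contributes only empty cells. -/
theorem coverN_le_coverN_of_refines (f : ℕ → X → X) (A : ℕ → ℕ) (n : ℕ) (Λ : Set X)
    {α β : Finset (Set X)} (hα : ⋃₀ (α : Set (Set X)) = univ)
    (href : ∀ u ∈ α, u.Nonempty → ∃ v ∈ β, u ⊆ v) :
    coverN f A n Λ β ≤ coverN f A n Λ α := by
  classical
  obtain ⟨T, hTα, hTΛ, hTcard⟩ := exists_card_eq_coverN f A n Λ hα
  set g : Set X → Set X := fun u => if h : ∃ v ∈ β, u ⊆ v then h.choose else u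
  have hg : ∀ u ∈ α, u.Nonempty → g u ∈ β ∧ u ⊆ g u := fun u hu hne => by
    have h := href u hu hne
    simpa only [g, dif_pos h] using h.choose_spec
  set T' := (T.filter fun u => ∀ j, (u j).Nonempty).image (g ∘ ·)
  calc coverN f A n Λ β ≤ T'.card := Nat.sInf_le ⟨T', ?_, ?_, rfl⟩
    _ ≤ T.card := Finset.card_image_le.trans (Finset.card_filter_le _ _)
    _ = coverN f A n Λ α := hTcard
  · simp only [T', Finset.mem_image, Finset.mem_filter]
    rintro _ ⟨u, ⟨hu, hne⟩, rfl⟩ j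
    exact (hg _ (hTα u hu j) (hne j)).1
  · intro x hx
    obtain ⟨u, hu, hxu⟩ := mem_iUnion₂.1 (hTΛ hx)
    have hxu : ∀ j : Fin n, nacomp f 0 (A j) x ∈ u j := mem_iInter.1 hxu
    refine mem_iUnion₂.2 ⟨g ∘ u, ?_, mem_iInter.2 fun j => ?_⟩
    · exact Finset.mem_image_of_mem _ (Finset.mem_filter.2 ⟨hu, fun j => ⟨_, hxu j⟩⟩)
    · exact (hg _ (hTα u hu j) ⟨_, hxu j⟩).2 (hxu j)

theorem coverEntOf_le_coverEntOf_of_refines (f : ℕ → X → X) (A : ℕ → ℕ) (Λ : Set X)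
    {α β : Finset (Set X)} (hα : ⋃₀ (α : Set (Set X)) = univ)
    (href : ∀ u ∈ α, u.Nonempty → ∃ v ∈ β, u ⊆ v) :
    coverEntOf f A Λ β ≤ coverEntOf f A Λ α := by
  refine limsup_le_limsup (Eventually.of_forall fun n => ?_)
  have hN := coverN_le_coverN_of_refines f A n Λ hα href
  rw [EReal.coe_le_coe_iff]
  refine div_le_div_of_nonneg_right ?_ n.cast_nonneg
  rcases (coverN f A n Λ β).eq_zero_or_pos with h0 | hpos
  · simpa [h0] using Real.log_natCast_nonneg _
  · exact Real.log_le_log (by exact_mod_cast hpos) (by exact_mod_cast hN)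

end Refinement

theorem IsFinOpenCover.exists_forall_ediam_lt_refines {X : Type*} [PseudoEMetricSpace X]
    [CompactSpace X] {β : Finset (Set X)} (hβ : IsFinOpenCover β) :
    ∃ δ > 0, ∀ u : Set X, Metric.ediam u < δ → u.Nonempty → ∃ v ∈ β, u ⊆ v := by
  obtain ⟨δ, hδ, hball⟩ :=
    lebesgue_number_lemma_of_emetric_sUnion isCompact_univ hβ.1 hβ.2.symm.subset
  refine ⟨δ, hδ, fun u hu ⟨x, hx⟩ => ?_⟩
  obtain ⟨v, hv, hxv⟩ := hball x (mem_univ x)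
  exact ⟨v, hv, fun y hy => hxv <|
    Metric.mem_eball.2 ((Metric.edist_le_ediam_of_mem hy hx).trans_lt hu)⟩

theorem tendsto_coverEntOf_general {X : Type*} [MetricSpace X] [CompactSpace X]
    (f : ℕ → X → X) (A : ℕ → ℕ)
    (α : ℕ → Finset (Set X)) (hα : ∀ n, IsFinOpenCover (α n))
    (hdiam : Tendsto (fun n => (α n).sup (fun u => EMetric.diam u)) atTop (nhds 0)) :
    Tendsto (fun n => coverEntOf f A univ (α n)) atTop (nhds (coverEnt f A univ)) := by
  refine tendsto_of_le_liminf_of_limsup_le ?_ ?_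
  · refine iSup_le fun ⟨β, hβ⟩ => le_liminf_of_le (by isBoundedDefault) ?_
    obtain ⟨δ, hδ, hrefines⟩ := hβ.exists_forall_ediam_lt_refines
    filter_upwards [hdiam.eventually_lt_const hδ] with n hn
    exact coverEntOf_le_coverEntOf_of_refines f A univ (hα n).2 fun u hu =>
      hrefines u ((Finset.le_sup hu).trans_lt hn)
  · exact limsup_le_of_le (by isBoundedDefault) <| Eventually.of_forall fun n =>
      le_iSup_of_le (⟨α n, hα n⟩ : {𝒜 : Finset (Set X) // IsFinOpenCover 𝒜}) le_rfl

/-- If `α n` are finite open covers with diameters tending to `0`, then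
`h_A(f, α n) → h_A(f)` (in `EReal`, so the infinite case is included). -/
theorem tendsto_coverEntOf {X : Type*} [MetricSpace X] [CompactSpace X]
    (f : ℕ → X → X) (hf : ∀ n, Continuous (f n)) (A : ℕ → ℕ) (hA : StrictMono A)
    (α : ℕ → Finset (Set X)) (hα : ∀ n, IsFinOpenCover (α n))
    (hdiam : Tendsto (fun n => (α n).sup (fun u => EMetric.diam u)) atTop (nhds 0)) :
    Tendsto (fun n => coverEntOf f A univ (α n)) atTop (nhds (coverEnt f A univ)) :=
  tendsto_coverEntOf_general f A α hα hdiam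
end

section
/- Let X be a compact metric space, f_{0,∞} a sequence of continuous self-maps, A = {a_i} an increasing sequence of nonnegative integers, and n ≥ 1. Then h_A(f_{0,∞}^n) = h_{nA}(f_{0,∞}), where f_{0,∞}^n is the n-th compositions system with maps f_{kn}^n = f_{kn+n-1}∘⋯∘f_{kn}, and nA = {n·a_i}. -/
open Filter Set MeasureTheory

lemma nacomp_add {X : Type*} (f : ℕ → X → X) (i a m : ℕ) :
    nacomp f i (a + m) = nacomp f (i + a) m ∘ nacomp f i a := by
  induction m with
  | zero => rfl
  | succ m ih =>
    change f (i + (a + m)) ∘ nacomp f i (a + m) = f (i + a + m) ∘ nacomp f (i + a) m ∘ _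
    rw [ih, Nat.add_assoc]

lemma nacomp_compSys {X : Type*} (f : ℕ → X → X) (n k : ℕ) :
    nacomp (compSys f n) 0 k = nacomp f 0 (n * k) := by
  induction k with
  | zero => rfl
  | succ k ih =>
    change compSys f n (0 + k) ∘ nacomp (compSys f n) 0 k = _
    rw [ih, Nat.mul_succ, nacomp_add, Nat.zero_add, Nat.zero_add, Nat.mul_comm]
    rfl

section Congr

variable {X : Type*} [PseudoMetricSpace X] {f g : ℕ → X → X} {A B : ℕ → ℕ}

lemma maxSep_congr (h : ∀ j, nacomp f 0 (A j) = nacomp g 0 (B j)) (k : ℕ) (ε : ℝ)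
    (Λ : Set X) : maxSep f A k ε Λ = maxSep g B k ε Λ := by
  simp only [maxSep, IsSepSet, h]

lemma sepEnt_congr (h : ∀ j, nacomp f 0 (A j) = nacomp g 0 (B j)) (Λ : Set X) :
    sepEnt f A Λ = sepEnt g B Λ := by
  simp only [sepEnt, maxSep_congr h]

end Congr

theorem sepEnt_compSys_general {X : Type*} [MetricSpace X]
    (f : ℕ → X → X)
    (A : ℕ → ℕ) (n : ℕ) :
    sepEnt (compSys f n) A univ = sepEnt f (fun i => n * A i) univ :=
  sepEnt_congr (fun j => nacomp_compSys f n (A j)) univ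

/-- `h_A(f_{0,∞}^n) = h_{nA}(f_{0,∞})`. -/
theorem sepEnt_compSys {X : Type*} [MetricSpace X] [CompactSpace X]
    (f : ℕ → X → X) (hf : ∀ m, Continuous (f m))
    (A : ℕ → ℕ) (hA : StrictMono A) (n : ℕ) (hn : 1 ≤ n) :
    sepEnt (compSys f n) A univ = sepEnt f (fun i => n * A i) univ :=
  sepEnt_compSys_general f A n
end
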